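/- The function (x,t) ↦ ν(x,t) = inf_{y∈ℝ} F(y;x,t) is finite and continuous on ℝ × (0,∞). -/

import Mathlib

open MeasureTheory Set Filter Topology

noncomputable def Mtot (ρ : Measure ℝ) : ℝ := (ρ Set.univ).toReal

noncomputable def m0 (ρ : Measure ℝ) (y : ℝ) : ℝ := (ρ (Set.Iio y)).toReal

noncomputable def m0p (ρ : Measure ℝ) (y : ℝ) : ℝ := (ρ (Set.Iic y)).toReal

/-- `m̃₀(y) = (1/2)(ρ((−∞,y)) + ρ((−∞,y]) − M)`. -/
noncomputable def mtilde (ρ : Measure ℝ) (y : ℝ) : ℝ :=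
  (m0 ρ y + m0p ρ y - Mtot ρ) / 2

/-- topological support of the measure. -/
def msupp (ρ : Measure ℝ) : Set ℝ := {x | ∀ U ∈ nhds x, 0 < ρ U}

/-- The generalized potential `F(y;x,t)`. -/
noncomputable def Fpot (ρ : Measure ℝ) (u₀ : ℝ → ℝ) (τ y x t : ℝ) : ℝ :=
  ∫ η in Set.Iio y,
    (η + u₀ η * (τ * (1 - Real.exp (-t / τ)))
       + mtilde ρ η * (τ ^ 2 - τ ^ 2 * Real.exp (-t / τ) - τ * t) - x) ∂ρ

/-- The right-limit value `F(y+;x,t)` (integral over `(−∞,y]`). -/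
noncomputable def FpotP (ρ : Measure ℝ) (u₀ : ℝ → ℝ) (τ y x t : ℝ) : ℝ :=
  ∫ η in Set.Iic y,
    (η + u₀ η * (τ * (1 - Real.exp (-t / τ)))
       + mtilde ρ η * (τ ^ 2 - τ ^ 2 * Real.exp (-t / τ) - τ * t) - x) ∂ρ

/-- `ν(x,t) = inf_y F(y;x,t)`. -/
noncomputable def nuEP (ρ : Measure ℝ) (u₀ : ℝ → ℝ) (τ x t : ℝ) : ℝ :=
  ⨅ y : ℝ, Fpot ρ u₀ τ y x t

/-- `S(x,t)`: points approachable by sequences along which `F` tends to `ν(x,t)`. -/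
def Sset (ρ : Measure ℝ) (u₀ : ℝ → ℝ) (τ x t : ℝ) : Set ℝ :=
  {y | ∃ yn : ℕ → ℝ, Tendsto yn atTop (𝓝 y) ∧
    Tendsto (fun n => Fpot ρ u₀ τ (yn n) x t) atTop (𝓝 (nuEP ρ u₀ τ x t))}

/-- `y_*(x,t) = inf (S(x,t) ∩ supp ρ₀)`. -/
noncomputable def ystar (ρ : Measure ℝ) (u₀ : ℝ → ℝ) (τ x t : ℝ) : ℝ :=
  sInf (Sset ρ u₀ τ x t ∩ msupp ρ)

/-- initial speed `c(y;x,t)` of the characteristic connecting `(y,0)` and `(x,t)`. -/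
noncomputable def cspeed (ρ : Measure ℝ) (τ y x t : ℝ) : ℝ :=
  (x - y) / (τ * (1 - Real.exp (-t / τ)))
    - mtilde ρ y * (τ - t / (1 - Real.exp (-t / τ)))

lemma mtilde_measurable (ρ : Measure ℝ) [IsFiniteMeasure ρ] : Measurable (mtilde ρ) := by
  have h0 : Monotone (m0 ρ) := fun a b hab =>
    ENNReal.toReal_mono (measure_ne_top ρ _) (measure_mono (Set.Iio_subset_Iio hab))
  have h1 : Monotone (m0p ρ) := fun a b hab =>
    ENNReal.toReal_mono (measure_ne_top ρ _) (measure_mono (Set.Iic_subset_Iic.mpr hab))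
  exact ((h0.measurable.add h1.measurable).sub measurable_const).div_const 2

lemma mtilde_bound (ρ : Measure ℝ) [IsFiniteMeasure ρ] (y : ℝ) :
    ‖mtilde ρ y‖ ≤ Mtot ρ := by
  have h0 : 0 ≤ m0 ρ y := ENNReal.toReal_nonneg
  have h1 : 0 ≤ m0p ρ y := ENNReal.toReal_nonneg
  have h2 : m0 ρ y ≤ Mtot ρ :=
    ENNReal.toReal_mono (measure_ne_top ρ _) (measure_mono (Set.subset_univ _))
  have h3 : m0p ρ y ≤ Mtot ρ :=
    ENNReal.toReal_mono (measure_ne_top ρ _) (measure_mono (Set.subset_univ _))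
  rw [Real.norm_eq_abs, abs_le]
  constructor <;> [skip; skip] <;> (unfold mtilde; nlinarith)

lemma mtilde_integrable (ρ : Measure ℝ) [IsFiniteMeasure ρ] :
    Integrable (mtilde ρ) ρ :=
  Integrable.mono' (integrable_const (Mtot ρ))
    (mtilde_measurable ρ).aestronglyMeasurable
    (Filter.Eventually.of_forall (mtilde_bound ρ))

theorem stmt4 (ρ : Measure ℝ) [IsFiniteMeasure ρ] (u₀ : ℝ → ℝ) (U₀ τ : ℝ)
    (hτ : 0 < τ)
    (hmom : Integrable (fun η : ℝ => η) ρ) (humeas : Measurable u₀)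
    (hu : ∀ᵐ η ∂ρ, |u₀ η| ≤ U₀) :
    (∀ x t : ℝ, 0 < t → BddBelow (Set.range fun y => Fpot ρ u₀ τ y x t)) ∧
    ContinuousOn (fun p : ℝ × ℝ => nuEP ρ u₀ τ p.1 p.2) (Set.univ ×ˢ Set.Ioi (0 : ℝ)) := by
  -- notation
  set A : ℝ → ℝ := fun t => τ * (1 - Real.exp (-t / τ)) with hA
  set B : ℝ → ℝ := fun t => τ ^ 2 - τ ^ 2 * Real.exp (-t / τ) - τ * t with hB
  -- integrability of u₀
  have hu_int : Integrable u₀ ρ := by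
    refine Integrable.mono' (integrable_const U₀) humeas.aestronglyMeasurable ?_
    filter_upwards [hu] with η h using h
  have hm_int : Integrable (mtilde ρ) ρ := mtilde_integrable ρ
  -- the integrand is integrable over all of ℝ
  have hgi : ∀ x t : ℝ, Integrable
      (fun η => η + u₀ η * A t + mtilde ρ η * B t - x) ρ := by
    intro x t
    exact ((hmom.add (hu_int.mul_const _)).add (hm_int.mul_const _)).sub
      (integrable_const x)
  have hFpot_eq : ∀ y x t : ℝ, Fpot ρ u₀ τ y x t =
      ∫ η in Set.Iio y, (η + u₀ η * A t + mtilde ρ η * B t - x) ∂ρ := by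
    intro y x t; rfl
  -- |Fpot y x t| ≤ ∫ ‖g‖
  have habs : ∀ x t y : ℝ, |Fpot ρ u₀ τ y x t| ≤
      ∫ η, ‖η + u₀ η * A t + mtilde ρ η * B t - x‖ ∂ρ := by
    intro x t y
    rw [hFpot_eq, ← Real.norm_eq_abs]
    calc ‖∫ η in Set.Iio y, (η + u₀ η * A t + mtilde ρ η * B t - x) ∂ρ‖
        ≤ ∫ η in Set.Iio y, ‖η + u₀ η * A t + mtilde ρ η * B t - x‖ ∂ρ :=
          norm_integral_le_integral_norm _
      _ ≤ ∫ η, ‖η + u₀ η * A t + mtilde ρ η * B t - x‖ ∂ρ :=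
          setIntegral_le_integral (hgi x t).norm
            (Filter.Eventually.of_forall fun η => norm_nonneg _)
  have hbdd : ∀ x t : ℝ, BddBelow (Set.range fun y => Fpot ρ u₀ τ y x t) := by
    intro x t
    refine ⟨-(∫ η, ‖η + u₀ η * A t + mtilde ρ η * B t - x‖ ∂ρ), ?_⟩
    rintro _ ⟨y, rfl⟩
    have := habs x t y
    rw [abs_le] at this
    exact this.1
  refine ⟨fun x t _ => hbdd x t, ?_⟩
  -- constants
  set Ku : ℝ := ∫ η, ‖u₀ η‖ ∂ρ with hKu
  set Km : ℝ := ∫ η, ‖mtilde ρ η‖ ∂ρ with hKm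
  -- key equi-continuity estimate
  have key : ∀ y x t x' t' : ℝ, |Fpot ρ u₀ τ y x t - Fpot ρ u₀ τ y x' t'| ≤
      Ku * |A t - A t'| + Km * |B t - B t'| + Mtot ρ * |x - x'| := by
    intro y x t x' t'
    rw [hFpot_eq, hFpot_eq, ← integral_sub ((hgi x t).restrict) ((hgi x' t').restrict)]
    have heq : (fun η => (η + u₀ η * A t + mtilde ρ η * B t - x) -
        (η + u₀ η * A t' + mtilde ρ η * B t' - x')) =
        fun η => u₀ η * (A t - A t') + mtilde ρ η * (B t - B t') - (x - x') := by
      funext η; ring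
    rw [heq, ← Real.norm_eq_abs]
    have hdi : Integrable
        (fun η => u₀ η * (A t - A t') + mtilde ρ η * (B t - B t') - (x - x')) ρ :=
      ((hu_int.mul_const _).add (hm_int.mul_const _)).sub (integrable_const _)
    have hri : Integrable
        (fun η => ‖u₀ η‖ * |A t - A t'| + ‖mtilde ρ η‖ * |B t - B t'| + |x - x'|) ρ :=
      ((hu_int.norm.mul_const _).add (hm_int.norm.mul_const _)).add (integrable_const _)
    calc ‖∫ η in Set.Iio y,
            (u₀ η * (A t - A t') + mtilde ρ η * (B t - B t') - (x - x')) ∂ρ‖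
        ≤ ∫ η in Set.Iio y,
            ‖u₀ η * (A t - A t') + mtilde ρ η * (B t - B t') - (x - x')‖ ∂ρ :=
          norm_integral_le_integral_norm _
      _ ≤ ∫ η, ‖u₀ η * (A t - A t') + mtilde ρ η * (B t - B t') - (x - x')‖ ∂ρ :=
          setIntegral_le_integral hdi.norm
            (Filter.Eventually.of_forall fun η => norm_nonneg _)
      _ ≤ ∫ η, (‖u₀ η‖ * |A t - A t'| + ‖mtilde ρ η‖ * |B t - B t'| + |x - x'|) ∂ρ := by
          refine integral_mono hdi.norm hri fun η => ?_
          calc ‖u₀ η * (A t - A t') + mtilde ρ η * (B t - B t') - (x - x')‖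
              ≤ ‖u₀ η * (A t - A t') + mtilde ρ η * (B t - B t')‖ + ‖x - x'‖ :=
                norm_sub_le _ _
            _ ≤ ‖u₀ η * (A t - A t')‖ + ‖mtilde ρ η * (B t - B t')‖ + ‖x - x'‖ := by
                have := norm_add_le (u₀ η * (A t - A t')) (mtilde ρ η * (B t - B t'))
                linarith
            _ = ‖u₀ η‖ * |A t - A t'| + ‖mtilde ρ η‖ * |B t - B t'| + |x - x'| := by
                simp [norm_mul, Real.norm_eq_abs]
      _ = (∫ η, (‖u₀ η‖ * |A t - A t'| + ‖mtilde ρ η‖ * |B t - B t'|) ∂ρ)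
            + ∫ _, |x - x'| ∂ρ :=
          integral_add ((hu_int.norm.mul_const _).add (hm_int.norm.mul_const _))
            (integrable_const _)
      _ = ((∫ η, ‖u₀ η‖ * |A t - A t'| ∂ρ) + ∫ η, ‖mtilde ρ η‖ * |B t - B t'| ∂ρ)
            + ∫ _, |x - x'| ∂ρ := by
          rw [integral_add (hu_int.norm.mul_const _) (hm_int.norm.mul_const _)]
      _ = Ku * |A t - A t'| + Km * |B t - B t'| + Mtot ρ * |x - x'| := by
          rw [integral_mul_const, integral_mul_const, integral_const]
          simp [Mtot, smul_eq_mul, mul_comm, hKu, hKm, Real.norm_eq_abs, measureReal_def]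
  -- Lipschitz-type estimate for nuEP
  have hnu_le : ∀ x t x' t' : ℝ, nuEP ρ u₀ τ x t ≤ nuEP ρ u₀ τ x' t' +
      (Ku * |A t - A t'| + Km * |B t - B t'| + Mtot ρ * |x - x'|) := by
    intro x t x' t'
    have h : nuEP ρ u₀ τ x t -
        (Ku * |A t - A t'| + Km * |B t - B t'| + Mtot ρ * |x - x'|) ≤
        nuEP ρ u₀ τ x' t' := by
      refine le_ciInf fun y => ?_
      have h1 : nuEP ρ u₀ τ x t ≤ Fpot ρ u₀ τ y x t := ciInf_le (hbdd x t) y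
      have h2 := key y x t x' t'
      rw [abs_le] at h2
      linarith [h2.1]
    linarith
  have hnu_abs : ∀ x t x' t' : ℝ, |nuEP ρ u₀ τ x t - nuEP ρ u₀ τ x' t'| ≤
      Ku * |A t - A t'| + Km * |B t - B t'| + Mtot ρ * |x - x'| := by
    intro x t x' t'
    rw [abs_le]
    constructor
    · have := hnu_le x' t' x t
      rw [abs_sub_comm (A t') (A t), abs_sub_comm (B t') (B t), abs_sub_comm x' x] at this
      linarith
    · have := hnu_le x t x' t'
      linarith
  -- continuity
  have hAc : Continuous A := by
    have : Continuous fun t : ℝ => Real.exp (-t / τ) :=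
      Real.continuous_exp.comp (continuous_neg.div_const τ)
    exact continuous_const.mul (continuous_const.sub this)
  have hBc : Continuous B := by
    have : Continuous fun t : ℝ => Real.exp (-t / τ) :=
      Real.continuous_exp.comp (continuous_neg.div_const τ)
    exact (continuous_const.sub (continuous_const.mul this)).sub
      (continuous_const.mul continuous_id)
  have hcont : Continuous (fun p : ℝ × ℝ => nuEP ρ u₀ τ p.1 p.2) := by
    rw [continuous_iff_continuousAt]
    intro p₀
    rw [ContinuousAt, tendsto_iff_dist_tendsto_zero]
    have hG : Continuous (fun p : ℝ × ℝ =>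
        Ku * |A p.2 - A p₀.2| + Km * |B p.2 - B p₀.2| + Mtot ρ * |p.1 - p₀.1|) := by
      refine Continuous.add (Continuous.add ?_ ?_) ?_
      · exact continuous_const.mul
          (continuous_abs.comp ((hAc.comp continuous_snd).sub continuous_const))
      · exact continuous_const.mul
          (continuous_abs.comp ((hBc.comp continuous_snd).sub continuous_const))
      · exact continuous_const.mul
          (continuous_abs.comp (continuous_fst.sub continuous_const))
    have hG0 : Filter.Tendsto (fun p : ℝ × ℝ =>
        Ku * |A p.2 - A p₀.2| + Km * |B p.2 - B p₀.2| + Mtot ρ * |p.1 - p₀.1|)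
        (𝓝 p₀) (𝓝 0) := by
      have := hG.tendsto p₀
      simpa using this
    refine squeeze_zero (fun p => dist_nonneg) ?_ hG0
    intro p
    rw [Real.dist_eq]
    exact hnu_abs p.1 p.2 p₀.1 p₀.2
  exact hcont.continuousOn
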